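/- arXiv:1901.10613 — 8 statements merged into one kernel-verified Lean document; each statement's English description precedes it below -/
import Mathlib

section
/- Let U ∈ ℝ^{m×m} be symmetric and γ > 0. If |U_{ij}| > γ/2 for some pair i ≠ j, then the function S ↦ γ·h₁(S) − tr(S(U − I)), defined on symmetric matrices S ∈ ℝ^{m×m}, is unbounded below. -/
/-!
Perturb `S = 0` along the symmetric direction `S = t (E_ij + E_ji)`, with `t` of the sign of
`U_ij`. Then `h₁(S) = |t|` while `tr(S(U - I)) = 2 t U_ij = 2 |t| |U_ij|`, so the objective equals
`-|t| (2 |U_ij| - γ)`, which tends to `-∞` as `|t| → ∞` because `2 |U_ij| > γ`.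
-/

open Matrix Real

/-- The sparsity penalty `h₁(Y) = ∑_{h<k} |Y_{hk}|`. -/
noncomputable def h1 {m : ℕ} (Y : Matrix (Fin m) (Fin m) ℝ) : ℝ :=
  ∑ p : Fin m × Fin m, if p.1 < p.2 then |Y p.1 p.2| else 0

namespace Matrix

variable {n α : Type*} [DecidableEq n]

theorem isSymm_single_add_single [AddCommMonoid α] (i j : n) (a : α) :
    (single i j a + single j i a).IsSymm := by
  rw [IsSymm, transpose_add, transpose_single, transpose_single, add_comm]

theorem trace_single_add_single_mul [Fintype n] [NonUnitalNonAssocSemiring α]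
    (i j : n) (a : α) (A : Matrix n n α) :
    ((single i j a + single j i a) * A).trace = a * (A j i + A i j) := by
  rw [add_mul, trace_add, trace_single_mul, trace_single_mul, smul_eq_mul, smul_eq_mul, mul_add]

end Matrix

theorem h1_single_add_single {m : ℕ} {i j : Fin m} (hij : i ≠ j) (a : ℝ) :
    h1 (single i j a + single j i a) = |a| := by
  wlog hlt : i < j generalizing i j
  · rw [add_comm]
    exact this hij.symm (hij.symm.lt_of_le (not_lt.mp hlt))
  rw [h1, Fintype.sum_eq_single (i, j)]
  · simp [hlt, hij.symm]
  · rintro ⟨k, l⟩ hkl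
    split_ifs with hkl_lt
    · have hij_ne : ¬(i = k ∧ j = l) := fun ⟨hik, hjl⟩ => hkl (by rw [hik, hjl])
      have hji_ne : ¬(j = k ∧ i = l) := fun ⟨hjk, hil⟩ =>
        lt_asymm hlt (by rwa [hjk, hil])
      simp [hij_ne, hji_ne]
    · rfl

theorem objective_single_add_single {m : ℕ} {U : Matrix (Fin m) (Fin m) ℝ} (hU : U.IsSymm)
    (γ : ℝ) {i j : Fin m} (hij : i ≠ j) (t : ℝ) :
    γ * h1 (single i j t + single j i t) - ((single i j t + single j i t) * (U - 1)).trace =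
      γ * |t| - 2 * t * U i j := by
  rw [h1_single_add_single hij, trace_single_add_single_mul, Matrix.sub_apply, Matrix.sub_apply,
    one_apply_ne hij, one_apply_ne hij.symm, hU.apply i j]
  ring

theorem stmt_3_general {m : ℕ} (U : Matrix (Fin m) (Fin m) ℝ) (hU : U.IsSymm)
    (γ : ℝ) (i j : Fin m) (hij : i ≠ j) (h : γ / 2 < |U i j|) :
    ∀ c : ℝ, ∃ S : Matrix (Fin m) (Fin m) ℝ, S.IsSymm ∧
      γ * h1 S - (S * (U - 1)).trace < c := by
  intro c
  obtain ⟨s, hs, hsU⟩ : ∃ s : ℝ, |s| = 1 ∧ s * U i j = |U i j| := by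
    rcases abs_choice (U i j) with habs | habs
    · exact ⟨1, abs_one, by rw [habs, one_mul]⟩
    · exact ⟨-1, by rw [abs_neg, abs_one], by rw [habs, neg_one_mul]⟩
  have hgap : 0 < 2 * |U i j| - γ := by linarith
  set r := (|c| + 1) / (2 * |U i j| - γ)
  have hr : 0 < r := by positivity
  refine ⟨single i j (r * s) + single j i (r * s), isSymm_single_add_single i j _, ?_⟩
  rw [objective_single_add_single hU γ hij, abs_mul, hs, abs_of_pos hr]
  calc γ * (r * 1) - 2 * (r * s) * U i j = -(r * (2 * |U i j| - γ)) := by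
        rw [← hsU]; ring
    _ = -(|c| + 1) := by rw [div_mul_cancel₀ _ hgap.ne']
    _ < c := by linarith [neg_abs_le c]

/-- If `U` is symmetric and `|U_{ij}| > γ/2` for some off-diagonal pair
`i ≠ j`, then `S ↦ γ·h₁(S) − tr(S(U − I))` is unbounded below over symmetric `S`. -/
theorem stmt_3 {m : ℕ} (U : Matrix (Fin m) (Fin m) ℝ) (hU : U.IsSymm)
    (γ : ℝ) (hγ : 0 < γ) (i j : Fin m) (hij : i ≠ j) (h : γ / 2 < |U i j|) :
    ∀ c : ℝ, ∃ S : Matrix (Fin m) (Fin m) ℝ, S.IsSymm ∧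
      γ * h1 S - (S * (U - 1)).trace < c :=
  stmt_3_general U hU γ i j hij h
end

section
/- Fix a symmetric positive definite Σ̂ ∈ ℝ^{m×m}, γ > 0 and δ ∈ ℝ, and let C := {(λ,U) : U ∈ 𝒰, λ > 0, λ⁻¹·ofd(U) + Σ̂ positive definite}. Let (λ_k, U_k)_{k∈ℕ} be a sequence in C with λ_k → 0. Then liminf_{k→∞} J̃(λ_k, U_k) ≥ 0 (in particular, since the infimum of J̃ over C is negative whenever the decomposition problem is nontrivial, such a sequence is not an infimizing sequence for J̃ over C). -/
open Matrix Real Filter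

/-- `ofd M`: the matrix `M` with its diagonal set to zero. -/
noncomputable def ofd {m : ℕ} (M : Matrix (Fin m) (Fin m) ℝ) : Matrix (Fin m) (Fin m) ℝ :=
  M - Matrix.diagonal (fun i => M i i)

/-- The dual objective `J̃(λ,U) = −λ(log det(λ⁻¹·ofd(U) + Σ̂) − log det Σ̂ − δ)`. -/
noncomputable def Jt {m : ℕ} (Shat : Matrix (Fin m) (Fin m) ℝ) (δ : ℝ)
    (lam : ℝ) (U : Matrix (Fin m) (Fin m) ℝ) : ℝ :=
  -lam * (Real.log (lam⁻¹ • ofd U + Shat).det - Real.log Shat.det - δ)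

/-- The constraint set `𝒰` for the multiplier `U`. -/
def calU (m : ℕ) (γ : ℝ) : Set (Matrix (Fin m) (Fin m) ℝ) :=
  {U | U.PosSemidef ∧ (∀ i, U i i = 1) ∧ ∀ h k, h ≠ k → |U h k| ≤ γ / 2}

lemma trace_eq_sum_eig {n : ℕ} {A : Matrix (Fin n) (Fin n) ℝ} (hA : A.IsHermitian) :
    A.trace = ∑ i, hA.eigenvalues i := by
  nth_rewrite 1 [hA.spectral_theorem]
  rw [Unitary.conjStarAlgAut_apply, Matrix.trace_mul_cycle]
  have : (star (hA.eigenvectorUnitary : Matrix (Fin n) (Fin n) ℝ)) *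
      (hA.eigenvectorUnitary : Matrix (Fin n) (Fin n) ℝ) = 1 := by
    exact_mod_cast Unitary.coe_star_mul_self hA.eigenvectorUnitary
  rw [this, Matrix.one_mul, Matrix.trace_diagonal]
  simp

lemma det_le_trace_pow {n : ℕ} {A : Matrix (Fin n) (Fin n) ℝ} (hA : A.PosDef) :
    A.det ≤ A.trace ^ n := by
  have h1 : A.det = ∏ i, hA.isHermitian.eigenvalues i := by
    simpa using hA.isHermitian.det_eq_prod_eigenvalues
  have h2 := trace_eq_sum_eig hA.isHermitian
  have hpos := hA.eigenvalues_pos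
  rw [h1, h2]
  calc ∏ i, hA.isHermitian.eigenvalues i
      ≤ ∏ _i : Fin n, ∑ j, hA.isHermitian.eigenvalues j := by
        apply Finset.prod_le_prod (fun i _ => (hpos i).le)
        intro i _
        exact Finset.single_le_sum (fun j _ => (hpos j).le) (Finset.mem_univ i)
    _ = (∑ j, hA.isHermitian.eigenvalues j) ^ n := by
        rw [Finset.prod_const, Finset.card_univ, Fintype.card_fin]
/-- Along any sequence in the dual feasible set `C` with `λ_k → 0`, the
liminf of `J̃(λ_k,U_k)` is nonnegative; hence such a sequence cannot be an infimizing
sequence when the optimal dual value is negative. -/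
theorem stmt_8 {m : ℕ} (Shat : Matrix (Fin m) (Fin m) ℝ) (hShat : Shat.PosDef)
    (γ : ℝ) (hγ : 0 < γ) (δ : ℝ)
    (lam : ℕ → ℝ) (U : ℕ → Matrix (Fin m) (Fin m) ℝ)
    (hfeas : ∀ k, U k ∈ calU m γ ∧ 0 < lam k ∧ ((lam k)⁻¹ • ofd (U k) + Shat).PosDef)
    (hlim : Tendsto lam atTop (nhds 0)) :
    0 ≤ Filter.liminf (fun k => Jt Shat δ (lam k) (U k)) atTop := by
  set C : ℝ := Real.log Shat.det + δ - Real.log (Shat.trace ^ m) with hC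
  have hle : ∀ k, lam k * C ≤ Jt Shat δ (lam k) (U k) := by
    intro k
    obtain ⟨-, hl, hpd⟩ := hfeas k
    have htr : ((lam k)⁻¹ • ofd (U k) + Shat).trace = Shat.trace := by
      rw [Matrix.trace_add, Matrix.trace_smul, Matrix.trace]
      simp [ofd, Matrix.diag]
    have hdet : ((lam k)⁻¹ • ofd (U k) + Shat).det ≤ Shat.trace ^ m := by
      simpa [htr] using det_le_trace_pow hpd
    have hlog : Real.log ((lam k)⁻¹ • ofd (U k) + Shat).det ≤ Real.log (Shat.trace ^ m) :=
      Real.log_le_log hpd.det_pos hdet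
    have hCle : C ≤ Real.log Shat.det + δ - Real.log ((lam k)⁻¹ • ofd (U k) + Shat).det := by
      rw [hC]; linarith
    calc lam k * C ≤ lam k * (Real.log Shat.det + δ -
          Real.log ((lam k)⁻¹ • ofd (U k) + Shat).det) :=
          mul_le_mul_of_nonneg_left hCle hl.le
      _ = Jt Shat δ (lam k) (U k) := by rw [Jt]; ring
  have h0 : Tendsto (fun k => lam k * C) atTop (nhds 0) := by
    simpa using hlim.mul_const C
  have hbd : IsBoundedUnder (· ≥ ·) atTop (fun k => Jt Shat δ (lam k) (U k)) :=
    (h0.isBoundedUnder_ge).mono_ge (Eventually.of_forall hle)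
  have hco : IsCoboundedUnder (· ≥ ·) atTop (fun k => lam k * C) :=
    h0.isBoundedUnder_le.isCoboundedUnder_ge
  by_cases hco2 : IsCoboundedUnder (· ≥ ·) atTop (fun k => Jt Shat δ (lam k) (U k))
  · calc (0:ℝ) = liminf (fun k => lam k * C) atTop := (h0.liminf_eq).symm
      _ ≤ _ := liminf_le_liminf (Eventually.of_forall hle) h0.isBoundedUnder_ge hco2
  · rw [liminf_eq, Real.sSup_of_not_bddAbove]
    intro ⟨b, hb⟩
    exact hco2 ⟨b, fun a ha => hb (eventually_map.mp ha)⟩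
end

section
/- Fix a symmetric positive definite Σ̂ ∈ ℝ^{m×m}, γ > 0 and δ > 0, and let C := {(λ,U) : U ∈ 𝒰, λ > 0, λ⁻¹·ofd(U) + Σ̂ positive definite}. Let (λ_k, U_k)_{k∈ℕ} be a sequence in C with λ_k → +∞. Then J̃(λ_k, U_k) → +∞ as k → ∞; in particular, such a sequence is not an infimizing sequence for J̃ over C. -/
open Matrix Real Filter Topology

/-- Along any sequence in the dual feasible set `C` with `λ_k → +∞` (and
`δ > 0`), `J̃(λ_k,U_k) → +∞`; hence such a sequence cannot be infimizing. -/
theorem stmt_9 {m : ℕ} (Shat : Matrix (Fin m) (Fin m) ℝ) (hShat : Shat.PosDef)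
    (γ : ℝ) (hγ : 0 < γ) (δ : ℝ) (hδ : 0 < δ)
    (lam : ℕ → ℝ) (U : ℕ → Matrix (Fin m) (Fin m) ℝ)
    (hfeas : ∀ k, U k ∈ calU m γ ∧ 0 < lam k ∧ ((lam k)⁻¹ • ofd (U k) + Shat).PosDef)
    (hlim : Tendsto lam atTop atTop) :
    Tendsto (fun k => Jt Shat δ (lam k) (U k)) atTop atTop := by
  -- entrywise bound on ofd (U k)
  have hofd_bd : ∀ k i j, |ofd (U k) i j| ≤ γ / 2 := by
    intro k i j
    obtain ⟨⟨_, hdiag, hoff⟩, _, _⟩ := hfeas k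
    by_cases hij : i = j
    · subst hij
      simp [ofd, Matrix.diagonal]
      positivity
    · simpa [ofd, Matrix.diagonal, hij] using hoff i j hij
  have hinv : Tendsto (fun k => (lam k)⁻¹) atTop (𝓝 0) :=
    hlim.inv_tendsto_atTop
  -- convergence of matrices
  have hmat : Tendsto (fun k => (lam k)⁻¹ • ofd (U k) + Shat) atTop (𝓝 Shat) := by
    have h0 : Tendsto (fun k => (lam k)⁻¹ • ofd (U k)) atTop (𝓝 0) := by
      apply tendsto_pi_nhds.2
      intro i
      rw [tendsto_pi_nhds]
      intro j
      have hb : ∀ k, ‖((lam k)⁻¹ • ofd (U k)) i j‖ ≤ |(lam k)⁻¹| * (γ / 2) := by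
        intro k
        simp only [Matrix.smul_apply, smul_eq_mul, Real.norm_eq_abs, abs_mul]
        exact mul_le_mul_of_nonneg_left (hofd_bd k i j) (abs_nonneg _)
      have hg : Tendsto (fun k => |(lam k)⁻¹| * (γ / 2)) atTop (𝓝 0) := by
        have := (hinv.abs).mul_const (γ / 2)
        simpa using this
      simpa using squeeze_zero_norm hb hg
    have := h0.add_const Shat
    simpa using this
  have hdetpos : 0 < Shat.det := hShat.det_pos
  have hlog : Tendsto (fun k => Real.log ((lam k)⁻¹ • ofd (U k) + Shat).det)
      atTop (𝓝 (Real.log Shat.det)) := by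
    have hdet : Tendsto (fun k => ((lam k)⁻¹ • ofd (U k) + Shat).det)
        atTop (𝓝 Shat.det) := ((continuous_id.matrix_det).tendsto Shat).comp hmat
    exact ((Real.continuousAt_log hdetpos.ne').tendsto).comp hdet
  -- the factor tends to δ > 0
  have hg : Tendsto (fun k => δ + Real.log Shat.det
      - Real.log ((lam k)⁻¹ • ofd (U k) + Shat).det) atTop (𝓝 δ) := by
    have := (tendsto_const_nhds (x := δ + Real.log Shat.det) (f := atTop (α := ℕ))).sub hlog
    simpa using this
  have hmain : Tendsto (fun k => lam k * (δ + Real.log Shat.det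
      - Real.log ((lam k)⁻¹ • ofd (U k) + Shat).det)) atTop atTop :=
    hlim.atTop_mul_pos hδ hg
  refine hmain.congr (fun k => ?_)
  simp only [Jt]
  ring
end

section
/- Fix a symmetric positive definite Σ̂ ∈ ℝ^{m×m} and δ ∈ ℝ. Let D := {(λ, Ũ) : λ > 0, Ũ ∈ ℝ^{m×m} symmetric with zero diagonal, λ⁻¹Ũ + Σ̂ positive definite}. Then D is a convex set and the function J̃(λ, Ũ) := −λ(log det(λ⁻¹Ũ + Σ̂) − log det Σ̂ − δ) is convex on D. -/
open Matrix Real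

section Helpers

variable {n : ℕ}

private lemma myPosDef_smul {A : Matrix (Fin n) (Fin n) ℝ} (hA : A.PosDef) {c : ℝ} (hc : 0 < c) :
    (c • A).PosDef := by
  refine Matrix.PosDef.of_dotProduct_mulVec_pos ?_ fun x hx => ?_
  · unfold Matrix.IsHermitian
    rw [conjTranspose_smul, hA.1]
    simp
  · rw [smul_mulVec, dotProduct_smul, smul_eq_mul]
    exact mul_pos hc (hA.dotProduct_mulVec_pos hx)

private lemma myPosDef_conj {B M : Matrix (Fin n) (Fin n) ℝ} (hB : B.PosDef)
    (hM : IsUnit M.det) : (Mᴴ * B * M).PosDef := by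
  refine Matrix.PosDef.of_dotProduct_mulVec_pos (isHermitian_conjTranspose_mul_mul M hB.1) fun x hx => ?_
  have h1 : (Mᴴ * B * M) *ᵥ x = Mᴴ *ᵥ (B *ᵥ (M *ᵥ x)) := by
    rw [← mulVec_mulVec, ← mulVec_mulVec]
  have hMx : M *ᵥ x ≠ 0 := by
    have hinj : Function.Injective (M.mulVec) :=
      Matrix.mulVec_injective_iff_isUnit.mpr ((isUnit_iff_isUnit_det M).mpr hM)
    exact (hinj.ne_iff' (mulVec_zero M)).mpr hx
  have h2 : star x ⬝ᵥ (Mᴴ *ᵥ (B *ᵥ (M *ᵥ x))) = star (M *ᵥ x) ⬝ᵥ (B *ᵥ (M *ᵥ x)) := by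
    rw [dotProduct_mulVec, ← star_mulVec]
  rw [h1, h2]
  exact hB.dotProduct_mulVec_pos hMx

private lemma myPosDef_comb {A B : Matrix (Fin n) (Fin n) ℝ} (hA : A.PosDef) (hB : B.PosDef)
    {μ ν : ℝ} (hμ : 0 ≤ μ) (hν : 0 ≤ ν) (hμν : μ + ν = 1) : (μ • A + ν • B).PosDef := by
  rcases hμ.eq_or_lt with rfl | hμ'
  · have : ν = 1 := by linarith
    subst this; simpa using hB
  rcases hν.eq_or_lt with rfl | hν'
  · have : μ = 1 := by linarith
    subst this; simpa using hA
  exact (myPosDef_smul hA hμ').add (myPosDef_smul hB hν')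

private lemma log_det_combo {A B : Matrix (Fin n) (Fin n) ℝ} (hA : A.PosDef) (hB : B.PosDef)
    {μ ν : ℝ} (hμ : 0 < μ) (hν : 0 < ν) (hμν : μ + ν = 1) :
    μ * Real.log A.det + ν * Real.log B.det ≤ Real.log (μ • A + ν • B).det := by
  classical
  open scoped MatrixOrder in set S := CFC.sqrt A with hSdef
  have hS : S * S = A := by open scoped MatrixOrder in exact CFC.sqrt_mul_sqrt_self A hA.posSemidef.nonneg
  have hdetS : S.det * S.det = A.det := by rw [← det_mul, hS]
  have hdetS0 : S.det ≠ 0 := by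
    intro h
    exact hA.det_pos.ne' (by rw [← hdetS, h, mul_zero])
  have hSunit : IsUnit S.det := hdetS0.isUnit
  have hSinv : S⁻¹ * S = 1 := nonsing_inv_mul S hSunit
  have hSinv' : S * S⁻¹ = 1 := mul_nonsing_inv S hSunit
  have hSinvherm : (S⁻¹).IsHermitian := by open scoped MatrixOrder in exact (CFC.sqrt_nonneg A).posSemidef.1.inv
  set C := S⁻¹ * B * S⁻¹ with hCdef
  have hC : C.PosDef := by
    have hinvdet : IsUnit (S⁻¹).det := by
      have h : (S⁻¹).det * S.det = 1 := by rw [← det_mul, hSinv, det_one]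
      exact IsUnit.of_mul_eq_one _ h
    have := myPosDef_conj hB hinvdet
    rwa [hSinvherm] at this
  have hSCS : S * C * S = B := by
    calc S * C * S = (S * S⁻¹) * B * (S⁻¹ * S) := by rw [hCdef]; noncomm_ring
    _ = B := by rw [hSinv', hSinv, Matrix.one_mul, Matrix.mul_one]
  have hcomb : μ • A + ν • B = S * (μ • (1 : Matrix (Fin n) (Fin n) ℝ) + ν • C) * S := by
    rw [Matrix.mul_add, Matrix.add_mul, mul_smul_comm, smul_mul_assoc, mul_smul_comm,
      smul_mul_assoc, Matrix.mul_one, hS, hSCS]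
  have hdet1 : (μ • A + ν • B).det = A.det * (μ • (1 : Matrix (Fin n) (Fin n) ℝ) + ν • C).det := by
    rw [hcomb, det_mul, det_mul, ← hdetS]; ring
  -- spectral theorem for C
  have hCh := hC.1
  set ev := hCh.eigenvalues with hev
  have hev_pos : ∀ i, 0 < ev i := hC.eigenvalues_pos
  set U : Matrix (Fin n) (Fin n) ℝ := (hCh.eigenvectorUnitary : Matrix (Fin n) (Fin n) ℝ)
    with hU
  have hUU : star U * U = 1 := (Matrix.mem_unitaryGroup_iff'.mp hCh.eigenvectorUnitary.2)
  have hdiag : star U * C * U = Matrix.diagonal (RCLike.ofReal ∘ ev) :=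
    by simpa [Unitary.conjStarAlgAut_apply, Matrix.mul_assoc] using hCh.conjStarAlgAut_star_eigenvectorUnitary
  have hkey : star U * (μ • (1 : Matrix (Fin n) (Fin n) ℝ) + ν • C) * U
      = Matrix.diagonal (fun i => μ + ν * ev i) := by
    rw [Matrix.mul_add, Matrix.add_mul, mul_smul_comm, smul_mul_assoc, mul_smul_comm,
      smul_mul_assoc, Matrix.mul_one, hUU, hdiag]
    ext i j
    rcases eq_or_ne i j with rfl | hij
    · simp [Matrix.diagonal_apply_eq, Matrix.one_apply_eq]
    · simp [Matrix.diagonal_apply_ne _ hij, Matrix.one_apply_ne hij]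
  have hdetUU : (star U).det * U.det = 1 := by
    rw [← det_mul, hUU, det_one]
  have hdet2 : (μ • (1 : Matrix (Fin n) (Fin n) ℝ) + ν • C).det
      = ∏ i, (μ + ν * ev i) := by
    have := congrArg Matrix.det hkey
    rw [det_mul, det_mul, det_diagonal] at this
    calc (μ • (1 : Matrix (Fin n) (Fin n) ℝ) + ν • C).det
        = ((star U).det * U.det) * (μ • (1 : Matrix (Fin n) (Fin n) ℝ) + ν • C).det := by
          rw [hdetUU, one_mul]
      _ = (star U).det * (μ • (1 : Matrix (Fin n) (Fin n) ℝ) + ν • C).det * U.det := by ring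
      _ = ∏ i, (μ + ν * ev i) := this
  have hterm_pos : ∀ i : Fin n, 0 < μ + ν * ev i := fun i =>
    add_pos hμ (mul_pos hν (hev_pos i))
  -- detC
  have hdetC : C.det = B.det / A.det := by
    rw [hCdef, det_mul, det_mul, det_nonsing_inv, ← hdetS]
    rw [Ring.inverse_eq_inv']
    field_simp
  have hdetC' : C.det = ∏ i, ev i := by
    have := hCh.det_eq_prod_eigenvalues
    simpa using this
  -- log inequality termwise
  have hlog_term : ∀ i : Fin n, ν * Real.log (ev i) ≤ Real.log (μ + ν * ev i) := by
    intro i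
    have h1 : (1 : ℝ) ∈ Set.Ioi (0 : ℝ) := Set.mem_Ioi.mpr one_pos
    have h2 : ev i ∈ Set.Ioi (0 : ℝ) := Set.mem_Ioi.mpr (hev_pos i)
    have := (strictConcaveOn_log_Ioi.concaveOn).2 h1 h2 hμ.le hν.le hμν
    simpa using this
  have hsum : ν * Real.log C.det ≤ Real.log ((μ • (1 : Matrix (Fin n) (Fin n) ℝ) + ν • C).det) := by
    rw [hdet2, Real.log_prod (fun i _ => (hterm_pos i).ne'), hdetC',
      Real.log_prod (fun i _ => (hev_pos i).ne'), Finset.mul_sum]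
    exact Finset.sum_le_sum fun i _ => hlog_term i
  have hposdet : 0 < (μ • (1 : Matrix (Fin n) (Fin n) ℝ) + ν • C).det := by
    rw [hdet2]; exact Finset.prod_pos fun i _ => hterm_pos i
  rw [hdet1, Real.log_mul hA.det_pos.ne' hposdet.ne']
  have hlogC : Real.log C.det = Real.log B.det - Real.log A.det := by
    rw [hdetC, Real.log_div hB.det_pos.ne' hA.det_pos.ne']
  rw [hlogC] at hsum
  have hz : μ * Real.log A.det = Real.log A.det - ν * Real.log A.det := by
    have hμ1 : μ = 1 - ν := by linarith
    rw [hμ1]; ring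
  linarith [hsum, hz]

private lemma comb_eq {U V Shat : Matrix (Fin n) (Fin n) ℝ} {t s a b : ℝ}
    (ha : a ≠ 0) (hb : b ≠ 0) (hT : t * a + s * b ≠ 0) :
    (t * a + s * b)⁻¹ • (t • U + s • V) + Shat
      = (t * a / (t * a + s * b)) • (a⁻¹ • U + Shat)
        + (s * b / (t * a + s * b)) • (b⁻¹ • V + Shat) := by
  match_scalars <;> field_simp <;> ring

end Helpers

/-- The domain `D = {(λ,Ũ) : λ > 0, Ũ symmetric hollow,
λ⁻¹Ũ + Σ̂ ≻ 0}` is convex, and `J̃(λ,Ũ) = −λ(log det(λ⁻¹Ũ + Σ̂) − log det Σ̂ − δ)` is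
convex on `D`. -/
theorem stmt_12 {m : ℕ} (Shat : Matrix (Fin m) (Fin m) ℝ) (hShat : Shat.PosDef)
    (δ : ℝ) :
    Convex ℝ {p : ℝ × Matrix (Fin m) (Fin m) ℝ |
        0 < p.1 ∧ p.2.IsSymm ∧ (∀ i, p.2 i i = 0) ∧ ((p.1)⁻¹ • p.2 + Shat).PosDef}
    ∧ ConvexOn ℝ
        {p : ℝ × Matrix (Fin m) (Fin m) ℝ |
          0 < p.1 ∧ p.2.IsSymm ∧ (∀ i, p.2 i i = 0) ∧ ((p.1)⁻¹ • p.2 + Shat).PosDef}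
        (fun p => -p.1 * (Real.log ((p.1)⁻¹ • p.2 + Shat).det - Real.log Shat.det - δ)) := by
  have hconv : Convex ℝ {p : ℝ × Matrix (Fin m) (Fin m) ℝ |
      0 < p.1 ∧ p.2.IsSymm ∧ (∀ i, p.2 i i = 0) ∧ ((p.1)⁻¹ • p.2 + Shat).PosDef} := by
    rintro ⟨a, U⟩ ⟨ha, hUs, hUh, hUpd⟩ ⟨b, V⟩ ⟨hb, hVs, hVh, hVpd⟩ t s ht hs hts
    have hT : 0 < t * a + s * b := by
      rcases ht.eq_or_lt with rfl | ht'
      · have : s = 1 := by linarith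
        subst this; simpa using hb
      · have := mul_nonneg hs hb.le
        nlinarith
    refine ⟨by simpa using hT, ?_, ?_, ?_⟩
    · show (t • U + s • V).IsSymm
      unfold Matrix.IsSymm
      rw [transpose_add, transpose_smul, transpose_smul, hUs, hVs]
    · intro i
      simp [show U i i = 0 from hUh i, show V i i = 0 from hVh i]
    · show (((t • (a, U) + s • (b, V) : ℝ × Matrix (Fin m) (Fin m) ℝ).1)⁻¹
        • (t • U + s • V) + Shat).PosDef
      have h1 : ((t • (a, U) + s • (b, V) : ℝ × Matrix (Fin m) (Fin m) ℝ).1) = t * a + s * b := by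
        simp
      rw [h1, comb_eq ha.ne' hb.ne' hT.ne']
      have hμν : t * a / (t * a + s * b) + s * b / (t * a + s * b) = 1 := by
        field_simp
      exact myPosDef_comb hUpd hVpd
        (div_nonneg (mul_nonneg ht ha.le) hT.le)
        (div_nonneg (mul_nonneg hs hb.le) hT.le) hμν
  refine ⟨hconv, hconv, ?_⟩
  rintro ⟨a, U⟩ ⟨ha, hUs, hUh, hUpd⟩ ⟨b, V⟩ ⟨hb, hVs, hVh, hVpd⟩ t s ht hs hts
  rcases ht.eq_or_lt with rfl | ht'
  · have : s = 1 := by linarith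
    subst this; simp
  rcases hs.eq_or_lt with rfl | hs'
  · have : t = 1 := by linarith
    subst this; simp
  -- main case: t, s > 0
  have hT : 0 < t * a + s * b := add_pos (mul_pos ht' ha) (mul_pos hs' hb)
  set μ := t * a / (t * a + s * b) with hμdef
  set ν := s * b / (t * a + s * b) with hνdef
  have hμ : 0 < μ := div_pos (mul_pos ht' ha) hT
  have hν : 0 < ν := div_pos (mul_pos hs' hb) hT
  have hμν : μ + ν = 1 := by rw [hμdef, hνdef]; field_simp
  have h1 : ((t • (a, U) + s • (b, V) : ℝ × Matrix (Fin m) (Fin m) ℝ).1) = t * a + s * b := by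
    simp
  have h2 : ((t • (a, U) + s • (b, V) : ℝ × Matrix (Fin m) (Fin m) ℝ).2) = t • U + s • V := by
    simp
  show -(t • (a, U) + s • (b, V) : ℝ × Matrix (Fin m) (Fin m) ℝ).1 * _ ≤ _
  rw [h1, h2, comb_eq ha.ne' hb.ne' hT.ne']
  have hkey := log_det_combo hUpd hVpd hμ hν hμν
  set LA := Real.log (a⁻¹ • U + Shat).det with hLA
  set LB := Real.log (b⁻¹ • V + Shat).det with hLB
  set L := Real.log (μ • (a⁻¹ • U + Shat) + ν • (b⁻¹ • V + Shat)).det with hL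
  have h3 : t * a * LA + s * b * LB ≤ (t * a + s * b) * L := by
    have := mul_le_mul_of_nonneg_left hkey hT.le
    calc t * a * LA + s * b * LB = (t * a + s * b) * (μ * LA + ν * LB) := by
          rw [hμdef, hνdef]; field_simp
      _ ≤ (t * a + s * b) * L := this
  show -(t * a + s * b) * (L - Real.log Shat.det - δ)
      ≤ t • (-a * (LA - Real.log Shat.det - δ)) + s • (-b * (LB - Real.log Shat.det - δ))
  simp only [smul_eq_mul]
  nlinarith [h3]
end

section
/- Fix a symmetric positive definite Σ̂ ∈ ℝ^{m×m} and δ ∈ ℝ, and let J̃(λ, Ũ) := −λ(log det(λ⁻¹Ũ + Σ̂) − log det Σ̂ − δ). Let (λ, Ũ) with λ > 0, Ũ symmetric hollow, and W := (λ⁻¹Ũ + Σ̂)⁻¹ well-defined and positive definite. Then for every direction (δλ, δŨ) with δŨ symmetric hollow, the second derivative at α = 0 of the function f(α) := J̃(λ + α·δλ, Ũ + α·δŨ) equals λ⁻³(δλ)²·tr(Ũ W Ũ W) − 2λ⁻²·δλ·tr(Ũ W δŨ W) + λ⁻¹·tr(δŨ W δŨ W). -/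
section stmt13aux
open Matrix Polynomial

section aux
lemma jacobi0 {m : ℕ} (M D : Matrix (Fin m) (Fin m) ℝ) (h : IsUnit M.det) :
    HasDerivAt (fun t : ℝ => (M + t • D).det) (M.det * (M⁻¹ * D).trace) 0 := by
  set B := M⁻¹ * D with hB
  set Q := (det (1 + (X : ℝ[X]) • B.map C)).divX.divX with hQ
  have key : ∀ t : ℝ, (M + t • D).det = M.det * (1 + B.trace * t + Q.eval t * t ^ 2) := by
    intro t
    have : M + t • D = M * (1 + t • B) := by
      rw [Matrix.mul_add, mul_one, Matrix.mul_smul, hB, ← Matrix.mul_assoc,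
        Matrix.mul_nonsing_inv _ h, Matrix.one_mul]
    rw [this, det_mul, Matrix.det_one_add_smul]
  have h2 : HasDerivAt (fun t : ℝ => 1 + B.trace * t + Q.eval t * t ^ 2)
      (B.trace + (Q.derivative.eval 0 * 0 ^ 2 + Q.eval 0 * (2 * 0 ^ 1))) 0 := by
    have ha : HasDerivAt (fun t : ℝ => 1 + B.trace * t) B.trace 0 := by
      simpa using ((hasDerivAt_id (0:ℝ)).const_mul B.trace).const_add 1
    exact ha.add ((Q.hasDerivAt 0).mul (hasDerivAt_pow 2 0))
  have h3 := h2.const_mul M.det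
  simp only [funext key]
  refine h3.congr_deriv ?_
  ring

lemma jacobi {m : ℕ} (N₀ D : Matrix (Fin m) (Fin m) ℝ) (α₀ : ℝ)
    (h : IsUnit (N₀ + α₀ • D).det) :
    HasDerivAt (fun α : ℝ => (N₀ + α • D).det)
      ((N₀ + α₀ • D).det * (((N₀ + α₀ • D)⁻¹ * D).trace)) α₀ := by
  have h0 : HasDerivAt (fun t : ℝ => (N₀ + α₀ • D + t • D).det)
      ((N₀ + α₀ • D).det * (((N₀ + α₀ • D)⁻¹ * D).trace)) (α₀ - α₀) := by
    simpa using jacobi0 (N₀ + α₀ • D) D h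
  have h1 := h0.comp_sub_const α₀ α₀
  have he : ∀ α : ℝ, N₀ + α₀ • D + (α - α₀) • D = N₀ + α • D := by
    intro α; rw [sub_smul]; abel
  simp only [he] at h1
  simpa using h1

section norminst
attribute [local instance] Matrix.linftyOpNormedAddCommGroup Matrix.linftyOpNormedRing
  Matrix.linftyOpNormedAlgebra

lemma invtr_deriv {m : ℕ} (N₀ D : Matrix (Fin m) (Fin m) ℝ) (h : IsUnit N₀.det) :
    HasDerivAt (fun α : ℝ => ((N₀ + α • D)⁻¹ * D).trace)
      (-(N₀⁻¹ * D * N₀⁻¹ * D).trace) 0 := by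
  have hN : HasDerivAt (fun α : ℝ => N₀ + α • D) D 0 := by
    have h1 := ((hasDerivAt_id (0:ℝ)).smul_const D).const_add N₀
    rw [one_smul] at h1
    exact h1
  have hU : IsUnit N₀ := (Matrix.isUnit_iff_isUnit_det N₀).2 h
  obtain ⟨u, hu⟩ := hU
  have hR : HasFDerivAt Ring.inverse
      (-ContinuousLinearMap.mulLeftRight ℝ (Matrix (Fin m) (Fin m) ℝ) ↑u⁻¹ ↑u⁻¹)
      (N₀ + (0:ℝ) • D) := by
    simpa [hu] using hasFDerivAt_ringInverse (𝕜 := ℝ) u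
  have hinv : HasDerivAt (fun α : ℝ => Ring.inverse (N₀ + α • D)) (-(N₀⁻¹ * D * N₀⁻¹)) 0 := by
    have := hR.comp_hasDerivAt 0 hN
    refine this.congr_deriv ?_
    simp [ContinuousLinearMap.mulLeftRight_apply, ← hu, Matrix.coe_units_inv,
      Matrix.mul_assoc]
  have hmul : HasDerivAt (fun α : ℝ => Ring.inverse (N₀ + α • D) * D)
      (-(N₀⁻¹ * D * N₀⁻¹) * D) 0 := hinv.mul_const D
  have hL := (LinearMap.toContinuousLinearMap
      (Matrix.traceLinearMap (Fin m) ℝ ℝ)).hasFDerivAt.comp_hasDerivAt 0 hmul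
  simp only [Function.comp, LinearMap.coe_toContinuousLinearMap', Matrix.traceLinearMap_apply] at hL
  simp only [Matrix.nonsing_inv_eq_ringInverse]
  refine hL.congr_deriv ?_
  simp [neg_mul, Matrix.nonsing_inv_eq_ringInverse, LinearMap.coe_toContinuousLinearMap',
    Matrix.traceLinearMap_apply]
  exact Matrix.trace_neg (Ring.inverse N₀ * D * Ring.inverse N₀ * D)
end norminst
end aux

end stmt13aux


open Matrix Real

/-- The second variation of
`J̃(λ,Ũ) = −λ(log det(λ⁻¹Ũ + Σ̂) − log det Σ̂ − δ)` at a point `(λ,Ũ)` with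
`W = (λ⁻¹Ũ + Σ̂)⁻¹ ≻ 0`, in a direction `(δλ, δŨ)` with `δŨ` symmetric hollow, equals
`λ⁻³(δλ)²·tr(ŨWŨW) − 2λ⁻²·δλ·tr(ŨWδŨW) + λ⁻¹·tr(δŨWδŨW)`. -/
theorem stmt_13 {m : ℕ} (Shat : Matrix (Fin m) (Fin m) ℝ) (hShat : Shat.PosDef)
    (δ : ℝ) (lam : ℝ) (hlam : 0 < lam)
    (Ut : Matrix (Fin m) (Fin m) ℝ) (hUsymm : Ut.IsSymm) (hUhollow : ∀ i, Ut i i = 0)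
    (hdom : (lam⁻¹ • Ut + Shat).PosDef)
    (W : Matrix (Fin m) (Fin m) ℝ) (hW : W = (lam⁻¹ • Ut + Shat)⁻¹)
    (dlam : ℝ) (dU : Matrix (Fin m) (Fin m) ℝ)
    (hdUsymm : dU.IsSymm) (hdUhollow : ∀ i, dU i i = 0) :
    deriv (deriv (fun α : ℝ =>
        -(lam + α * dlam) *
          (Real.log ((lam + α * dlam)⁻¹ • (Ut + α • dU) + Shat).det
            - Real.log Shat.det - δ))) 0
      = lam ^ (-3 : ℤ) * dlam ^ 2 * (Ut * W * Ut * W).trace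
        - 2 * lam ^ (-2 : ℤ) * dlam * (Ut * W * dU * W).trace
        + lam⁻¹ * (dU * W * dU * W).trace := by
  have hlam0 : lam ≠ 0 := ne_of_gt hlam
  set A : Matrix (Fin m) (Fin m) ℝ := lam⁻¹ • Ut + Shat with hA
  have hAdet : 0 < A.det := hdom.det_pos
  have hAdet0 : A.det ≠ 0 := ne_of_gt hAdet
  set c : ℝ := Real.log Shat.det + δ with hc
  set g : ℝ → ℝ := fun α => lam + α * dlam with hgdef
  set N₀ : Matrix (Fin m) (Fin m) ℝ := Ut + lam • Shat with hN₀
  set Dm : Matrix (Fin m) (Fin m) ℝ := dU + dlam • Shat with hDm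
  set p : ℝ → ℝ := fun α => (N₀ + α • Dm).det with hpdef
  set h : ℝ → ℝ := fun α => (m:ℝ) * (g α * Real.log (g α)) + c * g α - g α * Real.log (p α)
    with hhdef
  set D1 : ℝ → ℝ := fun α => (m:ℝ) * dlam * Real.log (g α) + (m:ℝ) * dlam + c * dlam
    - dlam * Real.log (p α) - g α * (((N₀ + α • Dm)⁻¹ * Dm).trace) with hD1def
  -- basic facts
  have hN0A : N₀ = lam • A := by
    rw [hN₀, hA, smul_add, smul_smul, mul_inv_cancel₀ hlam0, one_smul]
  have hg0 : g 0 = lam := by simp [hgdef]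
  have hp0 : p 0 = lam ^ m * A.det := by
    simp [hpdef, hN0A, Matrix.det_smul]
  have hp0pos : 0 < p 0 := by
    rw [hp0]; positivity
  -- W facts
  have hWA : W * A = 1 := by rw [hW]; exact Matrix.nonsing_inv_mul A (isUnit_iff_ne_zero.2 hAdet0)
  have hAW : A * W = 1 := by rw [hW]; exact Matrix.mul_nonsing_inv A (isUnit_iff_ne_zero.2 hAdet0)
  have hNinv : N₀⁻¹ = lam⁻¹ • W := by
    apply Matrix.inv_eq_left_inv
    rw [hN0A, Matrix.smul_mul, Matrix.mul_smul, smul_smul, inv_mul_cancel₀ hlam0, one_smul, hWA]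
  have hWS : W * Shat = 1 - lam⁻¹ • (W * Ut) := by
    have : W * (lam⁻¹ • Ut) + W * Shat = 1 := by rw [← Matrix.mul_add, ← hA, hWA]
    rw [Matrix.mul_smul] at this
    linear_combination (norm := module) this
  -- eventual positivity
  have hgc : Continuous g := by fun_prop
  have hpc : Continuous p := by
    apply Continuous.matrix_det
    fun_prop
  have hEg : ∀ᶠ α in nhds 0, 0 < g α := by
    refine (hgc.continuousAt (x := 0)).eventually ?_
    rw [hg0]
    exact eventually_gt_nhds hlam
  have hEp : ∀ᶠ α in nhds 0, 0 < p α :=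
    (hpc.continuousAt (x := 0)).eventually (eventually_gt_nhds hp0pos)
  -- step 1 : the function agrees with h near 0
  have hfh : (fun α : ℝ =>
        -(lam + α * dlam) *
          (Real.log ((lam + α * dlam)⁻¹ • (Ut + α • dU) + Shat).det
            - Real.log Shat.det - δ)) =ᶠ[nhds 0] h := by
    filter_upwards [hEg, hEp] with α hgα hpα
    have hgne : g α ≠ 0 := ne_of_gt hgα
    have hpne : p α ≠ 0 := ne_of_gt hpα
    have hsplit : N₀ + α • Dm = (Ut + α • dU) + g α • Shat := by
      rw [hN₀, hDm, hgdef, smul_add, add_smul, smul_smul]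
      abel
    have hmat : (lam + α * dlam)⁻¹ • (Ut + α • dU) + Shat = (g α)⁻¹ • (N₀ + α • Dm) := by
      have step : (g α)⁻¹ • (N₀ + α • Dm)
          = (g α)⁻¹ • (Ut + α • dU) + (g α)⁻¹ • (g α • Shat) := by
        rw [hsplit, smul_add]
      rw [step, smul_smul, inv_mul_cancel₀ hgne, one_smul]
    have hdet : ((lam + α * dlam)⁻¹ • (Ut + α • dU) + Shat).det = ((g α)⁻¹) ^ m * p α := by
      rw [hmat, Matrix.det_smul, Fintype.card_fin, hpdef]
    have hlog : Real.log (((g α)⁻¹) ^ m * p α) = -((m:ℝ) * Real.log (g α)) + Real.log (p α) := by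
      rw [Real.log_mul (pow_ne_zero m (inv_ne_zero hgne)) hpne, Real.log_pow, Real.log_inv]
      push_cast; ring
    show _ = h α
    rw [hhdef]
    simp only [hdet, hlog]
    simp only [hc, hgdef]
    ring
  -- step 2 : derivative of h near 0
  have hderiv1 : ∀ᶠ α in nhds 0, HasDerivAt h (D1 α) α := by
    filter_upwards [hEg, hEp] with α hgα hpα
    have hgne : g α ≠ 0 := ne_of_gt hgα
    have hpne : p α ≠ 0 := ne_of_gt hpα
    have hga : HasDerivAt g dlam α := by
      have h1 : HasDerivAt (fun x : ℝ => x * dlam) dlam α := by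
        simpa using (hasDerivAt_id α).mul_const dlam
      exact h1.const_add lam
    have hlga : HasDerivAt (fun a => Real.log (g a)) (dlam / g α) α := hga.log hgne
    have hpa : HasDerivAt p (p α * (((N₀ + α • Dm)⁻¹ * Dm).trace)) α :=
      jacobi N₀ Dm α (isUnit_iff_ne_zero.2 hpne)
    have hlpa : HasDerivAt (fun a => Real.log (p a))
        ((p α * (((N₀ + α • Dm)⁻¹ * Dm).trace)) / p α) α := hpa.log hpne
    have hDa : HasDerivAt h
        ((m:ℝ) * (dlam * Real.log (g α) + g α * (dlam / g α)) + c * dlam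
          - (dlam * Real.log (p α)
            + g α * ((p α * (((N₀ + α • Dm)⁻¹ * Dm).trace)) / p α))) α :=
      (((hga.mul hlga).const_mul (m:ℝ)).add (hga.const_mul c)).sub (hga.mul hlpa)
    have : (m:ℝ) * (dlam * Real.log (g α) + g α * (dlam / g α)) + c * dlam
          - (dlam * Real.log (p α)
            + g α * ((p α * (((N₀ + α • Dm)⁻¹ * Dm).trace)) / p α)) = D1 α := by
      rw [hD1def]
      field_simp
      ring
    exact this ▸ hDa
  have hd1 : deriv h =ᶠ[nhds 0] D1 := hderiv1.mono fun α hα => hα.deriv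
  have hkey : deriv (deriv (fun α : ℝ =>
        -(lam + α * dlam) *
          (Real.log ((lam + α * dlam)⁻¹ • (Ut + α • dU) + Shat).det
            - Real.log Shat.det - δ))) 0 = deriv D1 0 :=
    ((hfh.deriv).trans hd1).deriv_eq
  rw [hkey]
  -- step 3 : derivative of D1 at 0
  have hN0unit : IsUnit N₀.det := by
    have : p 0 = N₀.det := by simp [hpdef]
    exact isUnit_iff_ne_zero.2 (by rw [← this]; exact ne_of_gt hp0pos)
  have hga0 : HasDerivAt g dlam 0 := by
    have h1 : HasDerivAt (fun x : ℝ => x * dlam) dlam 0 := by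
      simpa using (hasDerivAt_id (0:ℝ)).mul_const dlam
    exact h1.const_add lam
  have hlg0 : HasDerivAt (fun a => Real.log (g a)) (dlam / lam) 0 := by
    simpa [hg0] using hga0.log (by rw [hg0]; exact hlam0)
  have hN0det0 : N₀.det ≠ 0 := hN0unit.ne_zero
  have hp00 : p 0 = N₀.det := by simp [hpdef]
  have hp'0 : HasDerivAt p (N₀.det * ((N₀⁻¹ * Dm).trace)) 0 := by
    simpa using jacobi N₀ Dm 0 (by simpa using hN0unit)
  have hlp0 : HasDerivAt (fun a => Real.log (p a)) ((N₀⁻¹ * Dm).trace) 0 := by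
    have := hp'0.log (ne_of_gt hp0pos)
    rwa [hp00, mul_div_cancel_left₀ _ hN0det0] at this
  have htr : HasDerivAt (fun α : ℝ => ((N₀ + α • Dm)⁻¹ * Dm).trace)
      (-(N₀⁻¹ * Dm * N₀⁻¹ * Dm).trace) 0 := invtr_deriv N₀ Dm hN0unit
  have hgtr : HasDerivAt (fun α : ℝ => g α * (((N₀ + α • Dm)⁻¹ * Dm).trace))
      (dlam * ((N₀⁻¹ * Dm).trace) + lam * (-(N₀⁻¹ * Dm * N₀⁻¹ * Dm).trace)) 0 := by
    have := hga0.mul htr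
    rw [hg0] at this
    refine this.congr_deriv ?_
    simp
  have hD1deriv : HasDerivAt D1
      ((m:ℝ) * dlam * (dlam / lam) - dlam * ((N₀⁻¹ * Dm).trace)
        - (dlam * ((N₀⁻¹ * Dm).trace) + lam * (-(N₀⁻¹ * Dm * N₀⁻¹ * Dm).trace))) 0 := by
    have t6 := ((((hlg0.const_mul ((m:ℝ) * dlam)).add_const ((m:ℝ) * dlam)).add_const
      (c * dlam)).sub (hlp0.const_mul dlam)).sub hgtr
    exact t6
  rw [hD1deriv.deriv]
  -- step 4 : final algebra
  have hWD : W * Dm = W * dU + dlam • (1 : Matrix (Fin m) (Fin m) ℝ)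
      - (dlam * lam⁻¹) • (W * Ut) := by
    rw [hDm, Matrix.mul_add, Matrix.mul_smul, hWS]
    rw [smul_sub, smul_smul]
    abel
  have hE1 : N₀⁻¹ * Dm = lam⁻¹ • (W * Dm) := by rw [hNinv, Matrix.smul_mul]
  have hT : (N₀⁻¹ * Dm).trace
      = lam⁻¹ * ((W * dU).trace + dlam * m - dlam * lam⁻¹ * (W * Ut).trace) := by
    rw [hE1, trace_smul, hWD]
    simp only [trace_sub, trace_add, trace_smul, Matrix.trace_one, Fintype.card_fin,
      smul_eq_mul]
    try ring
  have hT2 : (N₀⁻¹ * Dm * N₀⁻¹ * Dm).trace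
      = lam⁻¹ * lam⁻¹ * (((W * dU) * (W * dU)).trace
          + 2 * dlam * (W * dU).trace
          - 2 * (dlam * lam⁻¹) * ((W * dU) * (W * Ut)).trace
          + dlam * dlam * m
          - 2 * dlam * (dlam * lam⁻¹) * (W * Ut).trace
          + (dlam * lam⁻¹) * (dlam * lam⁻¹) * ((W * Ut) * (W * Ut)).trace) := by
    have assoc : N₀⁻¹ * Dm * N₀⁻¹ * Dm = (N₀⁻¹ * Dm) * (N₀⁻¹ * Dm) := by
      rw [Matrix.mul_assoc]
    rw [assoc, hE1, Matrix.smul_mul, Matrix.mul_smul, trace_smul, trace_smul, smul_eq_mul,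
      smul_eq_mul, hWD]
    have hcomm : ((W * Ut) * (W * dU)).trace = ((W * dU) * (W * Ut)).trace :=
      Matrix.trace_mul_comm _ _
    simp only [Matrix.add_mul, Matrix.mul_add, Matrix.sub_mul, Matrix.mul_sub,
      Matrix.smul_mul, Matrix.mul_smul, Matrix.mul_one, Matrix.one_mul,
      trace_add, trace_sub, trace_smul, smul_eq_mul, smul_smul, Matrix.trace_one,
      Fintype.card_fin, hcomm]
    ring
  have e1 : (Ut * W * Ut * W).trace = ((W * Ut) * (W * Ut)).trace := by
    rw [Matrix.trace_mul_comm (Ut * W * Ut) W,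
      show W * (Ut * W * Ut) = (W * Ut) * (W * Ut) by simp [Matrix.mul_assoc]]
  have e2 : (Ut * W * dU * W).trace = ((W * dU) * (W * Ut)).trace := by
    rw [Matrix.trace_mul_comm (Ut * W * dU) W,
      show W * (Ut * W * dU) = (W * Ut) * (W * dU) by simp [Matrix.mul_assoc]]
    exact Matrix.trace_mul_comm _ _
  have e3 : (dU * W * dU * W).trace = ((W * dU) * (W * dU)).trace := by
    rw [Matrix.trace_mul_comm (dU * W * dU) W,
      show W * (dU * W * dU) = (W * dU) * (W * dU) by simp [Matrix.mul_assoc]]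
  rw [hT, hT2, e1, e2, e3]
  have hz3 : lam ^ (-3 : ℤ) = (lam ^ (3:ℕ))⁻¹ := by
    rw [show (-3 : ℤ) = -((3:ℕ):ℤ) by norm_num, _root_.zpow_neg, zpow_natCast]
  have hz2 : lam ^ (-2 : ℤ) = (lam ^ (2:ℕ))⁻¹ := by
    rw [show (-2 : ℤ) = -((2:ℕ):ℤ) by norm_num, _root_.zpow_neg, zpow_natCast]
  rw [hz3, hz2]
  field_simp
  ring
end

section
/- Fix a symmetric positive definite Σ̂ ∈ ℝ^{m×m}. Let λ₀ > 0, Ũ₀ symmetric hollow with W := (λ₀⁻¹Ũ₀ + Σ̂)⁻¹ positive definite, and define the quadratic form Q(δλ, δŨ) := λ₀⁻³(δλ)²·tr(Ũ₀ W Ũ₀ W) − 2λ₀⁻²·δλ·tr(Ũ₀ W δŨ W) + λ₀⁻¹·tr(δŨ W δŨ W) on pairs (δλ, δŨ) with δλ ∈ ℝ and δŨ symmetric hollow. Then Q(δλ, δŨ) ≥ 0 for all such pairs, and Q(δλ, δŨ) = 0 if and only if there exists h ∈ ℝ with (δλ, δŨ) = (h·λ₀, h·Ũ₀). In other words, at every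 point there is exactly one line of directions along which the second variation of J̃ vanishes, namely the ray through the point itself. -/
open Matrix Real



lemma trace_symm_sq_nonneg {m : ℕ} (A : Matrix (Fin m) (Fin m) ℝ) (hA : A.IsSymm) :
    0 ≤ (A * A).trace ∧ ((A * A).trace = 0 ↔ A = 0) := by
  have key : (A * A).trace = ∑ i, ∑ j, (A i j) ^ 2 := by
    rw [Matrix.trace]
    simp only [Matrix.diag, Matrix.mul_apply]
    refine Finset.sum_congr rfl fun i _ => Finset.sum_congr rfl fun j _ => ?_
    rw [sq]
    congr 1
    exact hA.apply i j
  constructor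
  · rw [key]; positivity
  · rw [key]
    constructor
    · intro h
      ext i j
      have hnn : ∀ i ∈ Finset.univ, (0:ℝ) ≤ ∑ j, (A i j)^2 := by
        intro i _; positivity
      have h1 := (Finset.sum_eq_zero_iff_of_nonneg hnn).mp h i (Finset.mem_univ i)
      have hnn2 : ∀ j ∈ Finset.univ, (0:ℝ) ≤ (A i j)^2 := by intro j _; positivity
      have := (Finset.sum_eq_zero_iff_of_nonneg hnn2).mp h1 j (Finset.mem_univ j)
      simpa [pow_eq_zero_iff] using this
    · intro h; simp [h]

open scoped MatrixOrder

lemma trace_MWMW {m : ℕ} (M W : Matrix (Fin m) (Fin m) ℝ) (hM : M.IsSymm) (hW : W.PosDef) :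
    0 ≤ (M * W * M * W).trace ∧ ((M * W * M * W).trace = 0 ↔ M = 0) := by
  set S := CFC.sqrt W with hS
  have hSsq : S * S = W := CFC.sqrt_mul_sqrt_self W hW.posSemidef.nonneg
  have hSsymm : S.IsSymm := by
    have := (CFC.sqrt_nonneg W).posSemidef.1
    simpa [Matrix.IsHermitian, Matrix.IsSymm] using this
  set A := S * M * S with hA
  have hAsymm : A.IsSymm := by
    unfold Matrix.IsSymm
    rw [hA, Matrix.transpose_mul, Matrix.transpose_mul, hSsymm.eq, hM.eq, Matrix.mul_assoc]
  have htr : (M * W * M * W).trace = (A * A).trace := by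
    rw [hA, ← hSsq]
    rw [show M * (S * S) * M * (S * S) = M * S * (S * M * S) * S by noncomm_ring]
    rw [Matrix.trace_mul_cycle (M * S) (S * M * S) S]
    noncomm_ring
  obtain ⟨h1, h2⟩ := trace_symm_sq_nonneg A hAsymm
  rw [htr]
  refine ⟨h1, h2.trans ?_⟩
  constructor
  · intro hA0
    have hWunit := hW.isUnit
    have : W * M * W = S * A * S := by rw [hA, ← hSsq]; noncomm_ring
    have hWMW : W * M * W = 0 := by rw [this, hA0]; simp
    have := hWunit.invertible
    have h3 : M * W = W⁻¹ * (W * M * W) := by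
      rw [← Matrix.mul_assoc, ← Matrix.mul_assoc, Matrix.nonsing_inv_mul _ (Matrix.isUnit_iff_isUnit_det _ |>.mp hWunit), Matrix.one_mul]
    have h4 : M * W = 0 := by rw [h3, hWMW, Matrix.mul_zero]
    calc M = M * W * W⁻¹ := by rw [Matrix.mul_nonsing_inv_cancel_right _ _ (Matrix.isUnit_iff_isUnit_det _ |>.mp hWunit)]
    _ = 0 := by rw [h4, Matrix.zero_mul]
  · intro h; rw [hA, h]; simp

/-- The second-variation quadratic form
`Q(δλ,δŨ) = λ₀⁻³(δλ)²·tr(Ũ₀WŨ₀W) − 2λ₀⁻²·δλ·tr(Ũ₀WδŨW) + λ₀⁻¹·tr(δŨWδŨW)` is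
nonnegative, and vanishes exactly on the line of directions proportional to
`(λ₀, Ũ₀)`. -/
theorem stmt_14 {m : ℕ} (Shat : Matrix (Fin m) (Fin m) ℝ) (hShat : Shat.PosDef)
    (lam0 : ℝ) (hlam0 : 0 < lam0)
    (U0 : Matrix (Fin m) (Fin m) ℝ) (hU0symm : U0.IsSymm) (hU0hollow : ∀ i, U0 i i = 0)
    (W : Matrix (Fin m) (Fin m) ℝ) (hW : W = (lam0⁻¹ • U0 + Shat)⁻¹) (hWpd : W.PosDef)
    (dlam : ℝ) (dU : Matrix (Fin m) (Fin m) ℝ)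
    (hdUsymm : dU.IsSymm) (hdUhollow : ∀ i, dU i i = 0) :
    0 ≤ lam0 ^ (-3 : ℤ) * dlam ^ 2 * (U0 * W * U0 * W).trace
        - 2 * lam0 ^ (-2 : ℤ) * dlam * (U0 * W * dU * W).trace
        + lam0⁻¹ * (dU * W * dU * W).trace
    ∧ (lam0 ^ (-3 : ℤ) * dlam ^ 2 * (U0 * W * U0 * W).trace
        - 2 * lam0 ^ (-2 : ℤ) * dlam * (U0 * W * dU * W).trace
        + lam0⁻¹ * (dU * W * dU * W).trace = 0
      ↔ ∃ h : ℝ, dlam = h * lam0 ∧ dU = h • U0) := by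
  have hlne : lam0 ≠ 0 := hlam0.ne'
  set a : ℝ := lam0⁻¹ * dlam with ha
  set M : Matrix (Fin m) (Fin m) ℝ := a • U0 - dU with hM
  have hMsymm : M.IsSymm := by
    unfold Matrix.IsSymm
    rw [hM, Matrix.transpose_sub, Matrix.transpose_smul, hU0symm.eq, hdUsymm.eq]
  obtain ⟨h1, h2⟩ := trace_MWMW M W hMsymm hWpd
  have hc : (dU * W * U0 * W).trace = (U0 * W * dU * W).trace := by
    calc (dU * W * U0 * W).trace = ((dU * W) * (U0 * W)).trace := by rw [Matrix.mul_assoc]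
    _ = ((U0 * W) * (dU * W)).trace := Matrix.trace_mul_comm _ _
    _ = (U0 * W * dU * W).trace := by rw [← Matrix.mul_assoc]
  have hexp : (M * W * M * W).trace
      = a ^ 2 * (U0 * W * U0 * W).trace - 2 * a * (U0 * W * dU * W).trace
        + (dU * W * dU * W).trace := by
    rw [hM]
    simp only [Matrix.sub_mul, Matrix.mul_sub, Matrix.smul_mul, Matrix.mul_smul,
      Matrix.trace_sub, Matrix.trace_smul, smul_eq_mul, smul_smul]
    rw [hc]
    ring
  have e3 : lam0 ^ (-3 : ℤ) = (lam0 ^ 3)⁻¹ := by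
    norm_num
  have e2 : lam0 ^ (-2 : ℤ) = (lam0 ^ 2)⁻¹ := by
    norm_num
  have hQ : lam0 ^ (-3 : ℤ) * dlam ^ 2 * (U0 * W * U0 * W).trace
        - 2 * lam0 ^ (-2 : ℤ) * dlam * (U0 * W * dU * W).trace
        + lam0⁻¹ * (dU * W * dU * W).trace = lam0⁻¹ * (M * W * M * W).trace := by
    rw [hexp, ha, e3, e2]
    field_simp
  rw [hQ]
  constructor
  · exact mul_nonneg (inv_nonneg.mpr hlam0.le) h1
  · rw [mul_eq_zero]
    constructor
    · intro hcase
      have htr0 : (M * W * M * W).trace = 0 := by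
        rcases hcase with h | h
        · exact absurd h (inv_ne_zero hlne)
        · exact h
      have hM0 : M = 0 := h2.mp htr0
      refine ⟨a, ?_, ?_⟩
      · rw [ha]; field_simp
      · have := sub_eq_zero.mp (hM ▸ hM0 : a • U0 - dU = 0)
        exact this.symm
    · rintro ⟨h, hdl, hdu⟩
      right
      apply h2.mpr
      have : M = 0 := by
        rw [hM, hdu, ha, hdl]
        have : lam0⁻¹ * (h * lam0) = h := by field_simp
        rw [this, sub_self]
      exact this
end

section
/- Fix a symmetric positive definite Σ̂ ∈ ℝ^{m×m} and δ ∈ ℝ, and let J̃(λ, Ũ) := −λ(log det(λ⁻¹Ũ + Σ̂) − log det Σ̂ − δ). Let λ₀ > 0 and Ũ₀ be symmetric hollow with λ₀⁻¹Ũ₀ + Σ̂ positive definite, and let (δλ, δŨ) ≠ (0, 0) with δŨ symmetric hollow. If there exists ε > 0 such that the function f(α) := J̃(λ₀ + α·δλ, Ũ₀ + α·δŨ) is well-defined and constant for all |α| < ε, then J̃(λ₀, Ũ₀) = 0. -/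
open Matrix Real Polynomial


/-- If a nonzero real polynomial satisfies `X² R' = (m X - K) R`, then `K = 0`. -/
lemma aux_poly_ode (mm K : ℝ) (R : Polynomial ℝ) (hR : R ≠ 0)
    (h : X ^ 2 * R.derivative = (C mm * X - C K) * R) : K = 0 := by
  by_contra hK
  have hlin : (C mm * X - C K : Polynomial ℝ) ≠ 0 := by
    intro h0
    have : ((C mm * X - C K : Polynomial ℝ)).coeff 0 = 0 := by rw [h0]; simp
    simp [coeff_sub, coeff_C_mul, coeff_X_zero] at this
    exact hK this
  by_cases hR' : R.derivative = 0
  · rw [hR', mul_zero] at h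
    rcases mul_eq_zero.mp h.symm with h1 | h1
    · exact hlin h1
    · exact hR h1
  · have hntdlin : (C mm * X - C K : Polynomial ℝ).natTrailingDegree = 0 := by
      have : ((C mm * X - C K : Polynomial ℝ)).coeff 0 ≠ 0 := by
        simpa [coeff_sub, coeff_C_mul, coeff_X_zero] using neg_ne_zero.mpr hK
      exact Nat.le_zero.mp (natTrailingDegree_le_of_ne_zero this)
    have hX2 : (X ^ 2 : Polynomial ℝ) ≠ 0 := pow_ne_zero _ X_ne_zero
    have hL : (X ^ 2 * R.derivative).natTrailingDegree = 2 + R.derivative.natTrailingDegree := by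
      rw [natTrailingDegree_mul hX2 hR', natTrailingDegree_X_pow]
    have hRt : ((C mm * X - C K) * R).natTrailingDegree = R.natTrailingDegree := by
      rw [natTrailingDegree_mul hlin hR, hntdlin, zero_add]
    set j := R.natTrailingDegree with hj
    have hge : j - 1 ≤ R.derivative.natTrailingDegree := by
      apply le_natTrailingDegree hR'
      intro i hi
      rw [coeff_derivative]
      have : R.coeff (i + 1) = 0 := coeff_eq_zero_of_lt_natTrailingDegree (by omega)
      rw [this, zero_mul]
    have heq : 2 + R.derivative.natTrailingDegree = j := by rw [← hL, h, hRt]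
    omega

/-- positive scalar multiple of a posdef matrix is posdef -/
lemma aux_posdef_smul {n : ℕ} {c : ℝ} (hc : 0 < c) {A : Matrix (Fin n) (Fin n) ℝ}
    (hA : A.PosDef) : (c • A).PosDef := by
  refine ⟨?_, fun x hx => ?_⟩
  · unfold Matrix.IsHermitian
    rw [conjTranspose_smul, hA.1]
    simp
  · exact (hA.smul hc).2 hx

/-- If `J̃(λ,Ũ) = −λ(log det(λ⁻¹Ũ + Σ̂) − log det Σ̂ − δ)` is
well-defined and constant along a segment through `(λ₀,Ũ₀)` in a nonzero direction
`(δλ,δŨ)` with `δŨ` symmetric hollow, then `J̃(λ₀,Ũ₀) = 0`. -/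
theorem stmt_15 {m : ℕ} (Shat : Matrix (Fin m) (Fin m) ℝ) (hShat : Shat.PosDef)
    (δ : ℝ) (lam0 : ℝ) (hlam0 : 0 < lam0)
    (U0 : Matrix (Fin m) (Fin m) ℝ) (hU0symm : U0.IsSymm) (hU0hollow : ∀ i, U0 i i = 0)
    (hdom : (lam0⁻¹ • U0 + Shat).PosDef)
    (dlam : ℝ) (dU : Matrix (Fin m) (Fin m) ℝ)
    (hdUsymm : dU.IsSymm) (hdUhollow : ∀ i, dU i i = 0)
    (hnz : ¬ (dlam = 0 ∧ dU = 0))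
    (ε : ℝ) (hε : 0 < ε)
    (hwd : ∀ α : ℝ, |α| < ε → 0 < lam0 + α * dlam ∧
      ((lam0 + α * dlam)⁻¹ • (U0 + α • dU) + Shat).PosDef)
    (hconst : ∀ α : ℝ, |α| < ε →
      -(lam0 + α * dlam) *
          (Real.log ((lam0 + α * dlam)⁻¹ • (U0 + α • dU) + Shat).det
            - Real.log Shat.det - δ)
        = -lam0 * (Real.log (lam0⁻¹ • U0 + Shat).det - Real.log Shat.det - δ)) :
    -lam0 * (Real.log (lam0⁻¹ • U0 + Shat).det - Real.log Shat.det - δ) = 0 := by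
  classical
  set K : ℝ := lam0 * (Real.log (lam0⁻¹ • U0 + Shat).det - Real.log Shat.det - δ) with hK
  suffices hKz : K = 0 by rw [hK] at hKz; linarith
  -- the matrix path and its determinant as polynomial
  set N : ℝ → Matrix (Fin m) (Fin m) ℝ :=
    fun α => (U0 + α • dU) + (lam0 + α * dlam) • Shat with hN
  set Pm : Matrix (Fin m) (Fin m) (Polynomial ℝ) :=
    Matrix.of (fun i j => C (U0 i j) + C (dU i j) * X + (C lam0 + C dlam * X) * C (Shat i j))
    with hPm
  set P : Polynomial ℝ := Pm.det with hP
  have hPeval : ∀ α : ℝ, P.eval α = (N α).det := by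
    intro α
    have h1 : P.eval α = (Polynomial.evalRingHom α) P := rfl
    rw [h1, hP, RingHom.map_det]
    congr 1
    ext i j
    simp [hPm, hN, Matrix.map_apply, Matrix.add_apply, Matrix.smul_apply, smul_eq_mul]
    ring
  -- value of P on the segment
  have hPval : ∀ α : ℝ, |α| < ε →
      P.eval α = (lam0 + α * dlam) ^ m * Real.exp (K / (lam0 + α * dlam)
        + Real.log Shat.det + δ) := by
    intro α hα
    obtain ⟨hl, hM⟩ := hwd α hα
    have hNM : N α = (lam0 + α * dlam) • ((lam0 + α * dlam)⁻¹ • (U0 + α • dU) + Shat) := by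
      rw [hN]
      simp [smul_add, smul_smul, mul_inv_cancel₀ (ne_of_gt hl), mul_inv_cancel_left₀ (ne_of_gt hl)]
    have hdetN : (N α).det = (lam0 + α * dlam) ^ m *
        ((lam0 + α * dlam)⁻¹ • (U0 + α • dU) + Shat).det := by
      rw [hNM, det_smul, Fintype.card_fin]
    have hMpos := hM.det_pos
    have hc : (lam0 + α * dlam) *
        (Real.log ((lam0 + α * dlam)⁻¹ • (U0 + α • dU) + Shat).det
          - Real.log Shat.det - δ) = K := by
      have := hconst α hα
      rw [hK]; linarith
    have hlog : Real.log ((lam0 + α * dlam)⁻¹ • (U0 + α • dU) + Shat).det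
        = K / (lam0 + α * dlam) + Real.log Shat.det + δ := by
      have h2 : Real.log ((lam0 + α * dlam)⁻¹ • (U0 + α • dU) + Shat).det
          - Real.log Shat.det - δ = K / (lam0 + α * dlam) := by
        rw [eq_div_iff (ne_of_gt hl)]; linarith
      linarith
    have hMdet : ((lam0 + α * dlam)⁻¹ • (U0 + α • dU) + Shat).det
        = Real.exp (K / (lam0 + α * dlam) + Real.log Shat.det + δ) := by
      rw [← hlog, Real.exp_log hMpos]
    rw [hPeval, hdetN, hMdet]
  -- N 0 is positive definite
  have hN0 : (N 0).PosDef := by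
    have : N 0 = lam0 • (lam0⁻¹ • U0 + Shat) := by
      rw [hN]
      simp [smul_add, smul_smul, mul_inv_cancel₀ (ne_of_gt hlam0)]
    rw [this]
    exact aux_posdef_smul hlam0 hdom
  by_cases hdl : dlam = 0
  · -- direction is purely in U; derive a contradiction
    exfalso
    have hdU : dU ≠ 0 := fun h => hnz ⟨hdl, h⟩
    subst hdl
    set v0 : ℝ := lam0 ^ m * Real.exp (K / lam0 + Real.log Shat.det + δ) with hv0
    have hPconst : ∀ α : ℝ, |α| < ε → P.eval α = v0 := by
      intro α hα
      have := hPval α hα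
      simpa using this
    have hPC : P = C v0 := by
      apply Polynomial.eq_of_infinite_eval_eq
      apply Set.Infinite.mono (s := Set.Ioo (-ε) ε) _ (Set.Ioo_infinite (by linarith))
      intro x hx
      simp only [Set.mem_setOf_eq, eval_C]
      exact hPconst x (abs_lt.mpr ⟨hx.1, hx.2⟩)
    have hdetconst : ∀ α : ℝ, (N α).det = (N 0).det := by
      intro α
      rw [← hPeval, ← hPeval, hPC, eval_C, eval_C]
    -- square root of N 0
    have hps := hN0.posSemidef
    open scoped MatrixOrder in set W := CFC.sqrt (N 0) with hWdef
    have hWW : W * W = N 0 := by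
      open scoped MatrixOrder in exact CFC.sqrt_mul_sqrt_self (N 0) hps.nonneg
    have hWherm : W.IsHermitian := by
      open scoped MatrixOrder in exact (CFC.sqrt_nonneg (N 0)).posSemidef.1
    have hdetW : W.det ≠ 0 := by
      intro h
      have h2 : (N 0).det = 0 := by rw [← hWW, Matrix.det_mul, h, mul_zero]
      exact (ne_of_gt hN0.det_pos) h2
    have hUd : IsUnit W.det := isUnit_iff_ne_zero.mpr hdetW
    have hWi1 : W * W⁻¹ = 1 := Matrix.mul_nonsing_inv W hUd
    have hWi2 : W⁻¹ * W = 1 := Matrix.nonsing_inv_mul W hUd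
    set B := W⁻¹ * dU * W⁻¹ with hB
    have hWBW : W * B * W = dU := by
      rw [hB]
      simp only [Matrix.mul_assoc, hWi2, Matrix.mul_one]
      rw [← Matrix.mul_assoc, hWi1, Matrix.one_mul]
    have hBne : B ≠ 0 := by
      intro h0
      apply hdU
      rw [← hWBW, h0, Matrix.mul_zero, Matrix.zero_mul]
    have hdUherm : dU.IsHermitian := by
      rw [Matrix.IsHermitian, conjTranspose_eq_transpose_of_trivial]
      exact hdUsymm
    have hWinvherm : (W⁻¹).IsHermitian := by
      rw [Matrix.IsHermitian, Matrix.conjTranspose_nonsing_inv, hWherm.eq]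
    have hBherm : B.IsHermitian := by
      show Bᴴ = B
      rw [hB, conjTranspose_mul, conjTranspose_mul, hWinvherm.eq, hdUherm.eq,
        Matrix.mul_assoc]
    obtain ⟨v, t, ht, hv, hveq⟩ := hBherm.exists_eigenvector_of_ne_zero hBne
    have hNα : ∀ α : ℝ, N α = W * (1 + α • B) * W := by
      intro α
      have h1 : W * (1 + α • B) * W = W * W + α • (W * B * W) := by
        rw [Matrix.mul_add, Matrix.mul_one, Matrix.add_mul, mul_smul_comm, smul_mul_assoc]
      rw [h1, hWBW, hWW, hN]
      simp only [zero_smul, add_zero, mul_zero]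
      abel
    have hdet1 : ∀ α : ℝ, (1 + α • B).det = 1 := by
      intro α
      have h1 := hdetconst α
      rw [hNα α, Matrix.det_mul, Matrix.det_mul, ← hWW, Matrix.det_mul] at h1
      apply mul_right_cancel₀ (mul_ne_zero hdetW hdetW)
      linear_combination h1
    have hvec : (1 + (-t⁻¹) • B) *ᵥ v = 0 := by
      rw [Matrix.add_mulVec, Matrix.one_mulVec, Matrix.smul_mulVec, hveq, smul_smul]
      rw [neg_mul, inv_mul_cancel₀ ht, neg_smul, one_smul, add_neg_cancel]
    have hdet0 : (1 + (-t⁻¹) • B).det = 0 :=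
      Matrix.exists_mulVec_eq_zero_iff.mp ⟨v, hv, hvec⟩
    rw [hdet1 (-t⁻¹)] at hdet0
    exact one_ne_zero hdet0
  · -- dlam ≠ 0
    set c0 : ℝ := Real.log Shat.det + δ with hc0
    set R : Polynomial ℝ := P.comp (C dlam⁻¹ * (X - C lam0)) with hR
    have hReval : ∀ t : ℝ, R.eval t = P.eval (dlam⁻¹ * (t - lam0)) := by
      intro t; rw [hR, eval_comp]; simp
    set η : ℝ := min (ε * |dlam|) lam0 with hη
    have hηpos : 0 < η := lt_min (mul_pos hε (abs_pos.mpr hdl)) hlam0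
    have hη1 : η ≤ ε * |dlam| := min_le_left _ _
    have hη2 : η ≤ lam0 := min_le_right _ _
    set I : Set ℝ := Set.Ioo (lam0 - η/2) (lam0 + η/2) with hI
    have hIopen : IsOpen I := isOpen_Ioo
    have hmem : ∀ t ∈ I, 0 < t ∧ |dlam⁻¹ * (t - lam0)| < ε ∧
        lam0 + (dlam⁻¹ * (t - lam0)) * dlam = t := by
      intro t ht
      obtain ⟨h1, h2⟩ := ht
      have htpos : 0 < t := by linarith
      have habs : |t - lam0| < η / 2 := abs_lt.mpr ⟨by linarith, by linarith⟩
      have hdabs : 0 < |dlam| := abs_pos.mpr hdl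
      refine ⟨htpos, ?_, ?_⟩
      · rw [abs_mul, abs_inv]
        calc |dlam|⁻¹ * |t - lam0| < |dlam|⁻¹ * (η / 2) := by
              apply mul_lt_mul_of_pos_left habs (inv_pos.mpr hdabs)
          _ ≤ |dlam|⁻¹ * (ε * |dlam| / 2) := by
              apply mul_le_mul_of_nonneg_left (by linarith) (le_of_lt (inv_pos.mpr hdabs))
          _ = ε / 2 := by field_simp
          _ < ε := by linarith
      · field_simp
        ring
    have hval : ∀ t ∈ I, R.eval t = t ^ m * Real.exp (K * t⁻¹ + c0) := by
      intro t ht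
      obtain ⟨htpos, hαlt, hid⟩ := hmem t ht
      rw [hReval, hPval _ hαlt, hid, div_eq_mul_inv, hc0, add_assoc]
    have hptwise : ∀ t ∈ I,
        t ^ 2 * R.derivative.eval t = ((m : ℝ) * t - K) * R.eval t := by
      intro t ht
      obtain ⟨htpos, -, -⟩ := hmem t ht
      have htne : t ≠ 0 := ne_of_gt htpos
      have hEq : (fun s => R.eval s) =ᶠ[nhds t] (fun s => s ^ m * Real.exp (K * s⁻¹ + c0)) :=
        Filter.eventuallyEq_of_mem (hIopen.mem_nhds ht) (fun s hs => hval s hs)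
      have hd1 : HasDerivAt (fun s : ℝ => K * s⁻¹ + c0) (K * -(t ^ 2)⁻¹) t :=
        ((hasDerivAt_inv htne).const_mul K).add_const c0
      have hd2 : HasDerivAt (fun s : ℝ => Real.exp (K * s⁻¹ + c0))
          (Real.exp (K * t⁻¹ + c0) * (K * -(t ^ 2)⁻¹)) t := hd1.exp
      have hd3 : HasDerivAt (fun s : ℝ => s ^ m) ((m : ℝ) * t ^ (m - 1)) t :=
        hasDerivAt_pow m t
      have hd4 : HasDerivAt (fun s : ℝ => s ^ m * Real.exp (K * s⁻¹ + c0))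
          ((m : ℝ) * t ^ (m - 1) * Real.exp (K * t⁻¹ + c0)
            + t ^ m * (Real.exp (K * t⁻¹ + c0) * (K * -(t ^ 2)⁻¹))) t := hd3.mul hd2
      have hderiv : R.derivative.eval t
          = (m : ℝ) * t ^ (m - 1) * Real.exp (K * t⁻¹ + c0)
            + t ^ m * (Real.exp (K * t⁻¹ + c0) * (K * -(t ^ 2)⁻¹)) := by
        rw [← Polynomial.deriv, hEq.deriv_eq, hd4.deriv]
      set E : ℝ := Real.exp (K * t⁻¹ + c0) with hE
      have hpow : (m : ℝ) * t ^ (m - 1) * t ^ 2 = ((m : ℝ) * t) * t ^ m := by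
        cases m with
        | zero => simp
        | succ k => push_cast; simp [pow_succ]; ring
      have ht2 : t ^ 2 * (t ^ 2)⁻¹ = 1 := mul_inv_cancel₀ (pow_ne_zero 2 htne)
      rw [hderiv, hval t ht]
      calc t ^ 2 * ((m : ℝ) * t ^ (m - 1) * E + t ^ m * (E * (K * -(t ^ 2)⁻¹)))
          = ((m : ℝ) * t ^ (m - 1) * t ^ 2) * E
            - (t ^ 2 * (t ^ 2)⁻¹) * (K * t ^ m * E) := by ring
        _ = (((m : ℝ) * t) * t ^ m) * E - 1 * (K * t ^ m * E) := by rw [hpow, ht2]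
        _ = ((m : ℝ) * t - K) * (t ^ m * E) := by ring
    have hpolyid : (X ^ 2 * R.derivative : Polynomial ℝ) = (C (m : ℝ) * X - C K) * R := by
      apply Polynomial.eq_of_infinite_eval_eq
      apply Set.Infinite.mono _ (Set.Ioo_infinite (show lam0 - η/2 < lam0 + η/2 by linarith))
      intro t ht
      simp only [Set.mem_setOf_eq, eval_mul, eval_pow, eval_X, eval_sub, eval_C]
      exact hptwise t ht
    have hRne : R ≠ 0 := by
      intro h0
      have h1 : R.eval lam0 = (N 0).det := by
        rw [hReval]
        simp only [sub_self, mul_zero]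
        exact hPeval 0
      rw [h0] at h1
      simp only [eval_zero] at h1
      exact (ne_of_gt hN0.det_pos) h1.symm
    exact aux_poly_ode (m : ℝ) K R hRne hpolyid
end

section
/- Fix a symmetric positive definite Σ̂ ∈ ℝ^{m×m}, γ > 0 and δ ∈ ℝ, and let C := {(λ,U) : U ∈ 𝒰, λ > 0, λ⁻¹·ofd(U) + Σ̂ positive definite}. Let A ⊆ C be convex and suppose (λ₁, U₁) and (λ₂, U₂) both attain the minimum of J̃ over A, with minimum value J̃(λ₁, U₁) < 0. Then (λ₁, U₁) = (λ₂, U₂). In other words, the dual problem of minimizing J̃ admits at most one solution whenever its optimal value is negative. -/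
open Matrix Real

/-- The dual feasible set `C`. -/
def calC {m : ℕ} (Shat : Matrix (Fin m) (Fin m) ℝ) (γ : ℝ) :
    Set (ℝ × Matrix (Fin m) (Fin m) ℝ) :=
  {p | p.2 ∈ calU m γ ∧ 0 < p.1 ∧ ((p.1)⁻¹ • ofd p.2 + Shat).PosDef}

open Finset in
/-- Strict concavity of `log ∘ det` on positive definite matrices. -/
lemma logdet_strictConcave {n : ℕ} {M1 M2 : Matrix (Fin n) (Fin n) ℝ}
    (h1 : M1.PosDef) (h2 : M2.PosDef) {t : ℝ} (ht0 : 0 < t) (ht1 : t < 1)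
    (hne : M1 ≠ M2) :
    t * Real.log M1.det + (1 - t) * Real.log M2.det <
      Real.log (t • M1 + (1 - t) • M2).det := by
  classical
  set C : Matrix (Fin n) (Fin n) ℝ := (open MatrixOrder in CFC.sqrt M1) with hCdef
  have hCpsd : C.PosSemidef := (open MatrixOrder in (CFC.sqrt_nonneg M1).posSemidef)
  have hCH : C.IsHermitian := hCpsd.1
  have hCC : C * C = M1 := (open MatrixOrder in CFC.sqrt_mul_sqrt_self M1 h1.posSemidef.nonneg)
  have hdet1 : (0:ℝ) < M1.det := h1.det_pos
  have hdet2 : (0:ℝ) < M2.det := h2.det_pos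
  have hdetCC : C.det * C.det = M1.det := by
    have := congrArg Matrix.det hCC
    simpa [Matrix.det_mul] using this
  have hdetC : C.det ≠ 0 := by
    intro h; rw [h, mul_zero] at hdetCC; exact hdet1.ne (hdetCC)
  have hCinv : C * C⁻¹ = 1 := Matrix.mul_nonsing_inv C (isUnit_iff_ne_zero.mpr hdetC)
  have hCinv' : C⁻¹ * C = 1 := Matrix.nonsing_inv_mul C (isUnit_iff_ne_zero.mpr hdetC)
  have hCiH : C⁻¹.IsHermitian := hCH.inv
  set B : Matrix (Fin n) (Fin n) ℝ := C⁻¹ * M2 * C⁻¹ with hBdef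
  have hBH : B.IsHermitian := by
    have : (C⁻¹ * M2 * C⁻¹)ᴴ = C⁻¹ᴴ * M2ᴴ * C⁻¹ᴴ := by
      rw [conjTranspose_mul, conjTranspose_mul, Matrix.mul_assoc]
    rw [Matrix.IsHermitian, this, hCiH.eq, h2.isHermitian.eq]
  have hCBC : C * B * C = M2 := by
    calc C * (C⁻¹ * M2 * C⁻¹) * C
        = (C * C⁻¹) * (M2 * (C⁻¹ * C)) := by noncomm_ring
      _ = M2 := by rw [hCinv, hCinv', Matrix.one_mul, Matrix.mul_one]
  have hBpd : B.PosDef := by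
    refine Matrix.PosDef.of_dotProduct_mulVec_pos hBH (fun x hx => ?_)
    have hx' : C⁻¹ *ᵥ x ≠ 0 := by
      intro h
      apply hx
      have h' := congrArg (fun v => C *ᵥ v) h
      simpa [Matrix.mulVec_mulVec, hCinv] using h'
    have hq := h2.dotProduct_mulVec_pos hx'
    have hrw : star x ⬝ᵥ (B *ᵥ x) = star (C⁻¹ *ᵥ x) ⬝ᵥ (M2 *ᵥ (C⁻¹ *ᵥ x)) := by
      simp only [star_trivial, hBdef, ← Matrix.mulVec_mulVec]
      rw [Matrix.dotProduct_mulVec, ← Matrix.mulVec_transpose]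
      congr 1
      rw [show C⁻¹ᵀ = C⁻¹ from hCiH.eq]
    rw [hrw]; exact hq
  set μ : Fin n → ℝ := hBH.eigenvalues with hμdef
  have hμpos : ∀ i, 0 < μ i := fun i => hBpd.eigenvalues_pos i
  set V : Matrix (Fin n) (Fin n) ℝ := (hBH.eigenvectorUnitary : Matrix (Fin n) (Fin n) ℝ) with hVdef
  have hVV : V * star V = 1 :=
    (Matrix.mem_unitaryGroup_iff).mp hBH.eigenvectorUnitary.2
  have hspec : B = V * Matrix.diagonal (RCLike.ofReal ∘ μ) * star V := hBH.spectral_theorem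
  have hcoe : (RCLike.ofReal ∘ μ : Fin n → ℝ) = μ := by
    funext i; simp [RCLike.ofReal]
  rw [hcoe] at hspec
  set D : Matrix (Fin n) (Fin n) ℝ := t • (1:Matrix (Fin n) (Fin n) ℝ) + (1-t) • B with hDdef
  have hfact : t • M1 + (1-t) • M2 = C * D * C := by
    rw [hDdef, Matrix.mul_add, Matrix.add_mul, mul_smul_comm, mul_smul_comm,
      smul_mul_assoc, smul_mul_assoc, Matrix.mul_one, hCC, hCBC]
  have hdiag : t • (1:Matrix (Fin n) (Fin n) ℝ) + (1-t) • Matrix.diagonal μ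
      = Matrix.diagonal (fun i => t + (1-t) * μ i) := by
    ext i j
    by_cases h : i = j <;>
      simp [Matrix.one_apply, Matrix.diagonal_apply, h]
  have hD2 : D = V * Matrix.diagonal (fun i => t + (1-t) * μ i) * star V := by
    rw [hDdef, hspec, ← hdiag, Matrix.mul_add, Matrix.add_mul, mul_smul_comm, mul_smul_comm,
      smul_mul_assoc, smul_mul_assoc, Matrix.mul_one, hVV]
  have hdetD : D.det = ∏ i, (t + (1-t) * μ i) := by
    have hVV' : star V * V = 1 := (Matrix.mem_unitaryGroup_iff').mp hBH.eigenvectorUnitary.2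
    rw [hD2, Matrix.det_mul, Matrix.det_mul, mul_comm, ← mul_assoc, ← Matrix.det_mul, hVV']
    simp [Matrix.det_diagonal]
  have hterm : ∀ i, 0 < t + (1-t) * μ i := by
    intro i; nlinarith [hμpos i]
  have hdetDpos : 0 < D.det := by
    rw [hdetD]; exact Finset.prod_pos (fun i _ => hterm i)
  have hdetB : B.det = ∏ i, μ i := by
    rw [hBH.det_eq_prod_eigenvalues]
    exact Finset.prod_congr rfl fun i _ => congrFun hcoe i
  have hdetM2 : M2.det = M1.det * B.det := by
    have h := congrArg Matrix.det hCBC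
    rw [Matrix.det_mul, Matrix.det_mul] at h
    calc M2.det = C.det * B.det * C.det := h.symm
      _ = (C.det * C.det) * B.det := by ring
      _ = M1.det * B.det := by rw [hdetCC]
  have hdetBpos : 0 < B.det := hBpd.det_pos
  have hlogD : Real.log D.det = ∑ i, Real.log (t + (1-t) * μ i) := by
    rw [hdetD, Real.log_prod (fun i _ => (hterm i).ne')]
  have hlog2 : Real.log M2.det = Real.log M1.det + ∑ i, Real.log (μ i) := by
    rw [hdetM2, Real.log_mul hdet1.ne' hdetBpos.ne', hdetB,
      Real.log_prod (fun i _ => (hμpos i).ne')]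
  have hlogT : Real.log (t • M1 + (1-t) • M2).det = Real.log M1.det + Real.log D.det := by
    have h : (C * D * C).det = M1.det * D.det := by
      rw [Matrix.det_mul, Matrix.det_mul, ← hdetCC]; ring
    rw [hfact, h, Real.log_mul hdet1.ne' hdetDpos.ne']
  have hle : ∀ i, (1-t) * Real.log (μ i) ≤ Real.log (t + (1-t) * μ i) := by
    intro i
    rcases eq_or_ne (μ i) 1 with h | h
    · simp [h]
    · have hx := strictConcaveOn_log_Ioi.2 (Set.mem_Ioi.mpr one_pos)
        (Set.mem_Ioi.mpr (hμpos i)) (Ne.symm h) ht0 (show (0:ℝ) < 1 - t by linarith) (by ring)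
      simp only [smul_eq_mul, Real.log_one, mul_zero, mul_one, zero_add] at hx
      linarith
  by_cases hall : ∀ i, μ i = 1
  · exfalso
    apply hne
    have hμ1 : μ = fun _ => (1:ℝ) := funext hall
    have hB1 : B = 1 := by
      rw [hspec, hμ1]
      rw [show Matrix.diagonal (fun _ : Fin n => (1:ℝ)) = 1 from Matrix.diagonal_one]
      rw [Matrix.mul_one, hVV]
    have : M2 = M1 := by rw [← hCBC, hB1, Matrix.mul_one, hCC]
    exact this.symm
  · push_neg at hall
    obtain ⟨i0, hi0⟩ := hall
    have hlt0 : (1-t) * Real.log (μ i0) < Real.log (t + (1-t) * μ i0) := by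
      have hx := strictConcaveOn_log_Ioi.2 (Set.mem_Ioi.mpr one_pos)
        (Set.mem_Ioi.mpr (hμpos i0)) (Ne.symm hi0) ht0 (show (0:ℝ) < 1 - t by linarith)
        (by ring)
      simp only [smul_eq_mul, Real.log_one, mul_zero, mul_one, zero_add] at hx
      linarith
    have hsum : ∑ i, (1-t) * Real.log (μ i) < ∑ i, Real.log (t + (1-t) * μ i) :=
      Finset.sum_lt_sum (fun i _ => hle i) ⟨i0, Finset.mem_univ _, hlt0⟩
    rw [hlogT, hlog2, hlogD]
    rw [← Finset.mul_sum] at hsum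
    nlinarith [hsum]

/-- On any convex subset `A` of the dual feasible set `C`, the minimum
of `J̃` is attained at most once whenever the optimal value is negative. -/
theorem stmt_16 {m : ℕ} (Shat : Matrix (Fin m) (Fin m) ℝ) (hShat : Shat.PosDef)
    (γ : ℝ) (hγ : 0 < γ) (δ : ℝ)
    (A : Set (ℝ × Matrix (Fin m) (Fin m) ℝ)) (hA : A ⊆ calC Shat γ)
    (hAconv : Convex ℝ A)
    (p1 p2 : ℝ × Matrix (Fin m) (Fin m) ℝ) (hp1 : p1 ∈ A) (hp2 : p2 ∈ A)
    (hmin1 : ∀ q ∈ A, Jt Shat δ p1.1 p1.2 ≤ Jt Shat δ q.1 q.2)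
    (hmin2 : ∀ q ∈ A, Jt Shat δ p2.1 p2.2 ≤ Jt Shat δ q.1 q.2)
    (hneg : Jt Shat δ p1.1 p1.2 < 0) :
    p1 = p2 := by
  obtain ⟨hU1, hl1, hM1pd⟩ := hA hp1
  obtain ⟨hU2, hl2, hM2pd⟩ := hA hp2
  have hv : Jt Shat δ p2.1 p2.2 = Jt Shat δ p1.1 p1.2 :=
    le_antisymm (hmin2 p1 hp1) (hmin1 p2 hp2)
  have hsum : 0 < p1.1 + p2.1 := by linarith
  have h1ne : p1.1 ≠ 0 := hl1.ne'
  have h2ne : p2.1 ≠ 0 := hl2.ne'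
  have hsne : p1.1 + p2.1 ≠ 0 := hsum.ne'
  set t : ℝ := p1.1 / (p1.1 + p2.1) with htdef
  have ht0 : 0 < t := div_pos hl1 hsum
  have ht1 : t < 1 := by rw [div_lt_one hsum]; linarith
  set M1 := (p1.1)⁻¹ • ofd p1.2 + Shat with hM1def
  set M2 := (p2.1)⁻¹ • ofd p2.2 + Shat with hM2def
  set q := ((1:ℝ)/2) • p1 + ((1:ℝ)/2) • p2 with hqdef
  have hq : q ∈ A := hAconv hp1 hp2 (by norm_num) (by norm_num) (by norm_num)
  have hq1 : q.1 = (p1.1 + p2.1)/2 := by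
    simp only [hqdef, Prod.fst_add, Prod.smul_fst, smul_eq_mul]; ring
  have hq1pos : 0 < q.1 := by rw [hq1]; linarith
  have hq1ne : q.1 ≠ 0 := hq1pos.ne'
  have hq2 : q.2 = ((1:ℝ)/2) • p1.2 + ((1:ℝ)/2) • p2.2 := by
    simp only [hqdef, Prod.snd_add, Prod.smul_snd]
  have hmid : (q.1)⁻¹ • ofd q.2 + Shat = t • M1 + (1 - t) • M2 := by
    ext i j
    simp only [hM1def, hM2def, ofd, hq1, hq2, Matrix.add_apply, Matrix.smul_apply,
      Matrix.sub_apply, smul_eq_mul, Matrix.diagonal_apply]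
    rw [htdef]
    by_cases h : i = j
    · subst h
      simp only [if_pos rfl, ↓reduceIte]
      field_simp
      ring
    · simp only [if_neg (by simpa using h)]
      field_simp
      ring
  have e1 : Jt Shat δ p1.1 p1.2 = -p1.1 * (Real.log M1.det - Real.log Shat.det - δ) := rfl
  have e2 : Jt Shat δ p2.1 p2.2 = -p2.1 * (Real.log M2.det - Real.log Shat.det - δ) := rfl
  have hMeq : M1 = M2 := by
    by_contra hne
    have hconc := logdet_strictConcave hM1pd hM2pd ht0 ht1 hne
    have hJq : Jt Shat δ q.1 q.2
        = -q.1 * (Real.log (t • M1 + (1 - t) • M2).det - Real.log Shat.det - δ) := by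
      rw [Jt, hmid]
    have key : -q.1 * (t * Real.log M1.det + (1 - t) * Real.log M2.det
        - Real.log Shat.det - δ)
        = (Jt Shat δ p1.1 p1.2 + Jt Shat δ p2.1 p2.2) / 2 := by
      rw [e1, e2, hq1, htdef]
      field_simp
      ring
    have hlt : Jt Shat δ q.1 q.2 < Jt Shat δ p1.1 p1.2 := by
      rw [hJq]
      have step : -q.1 * (Real.log (t • M1 + (1 - t) • M2).det - Real.log Shat.det - δ)
          < -q.1 * (t * Real.log M1.det + (1 - t) * Real.log M2.det
            - Real.log Shat.det - δ) := by
        nlinarith [hconc, hq1pos]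
      rw [key] at step
      linarith [step, hv]
    exact absurd (hmin1 q hq) (not_le.mpr hlt)
  have hK : 0 < Real.log M1.det - Real.log Shat.det - δ := by
    nlinarith [hneg, hl1, e1]
  have hlam : p1.1 = p2.1 := by
    rw [e1] at hv
    rw [e2, ← hMeq] at hv
    have := hv
    nlinarith [hK]
  have hofd : ofd p1.2 = ofd p2.2 := by
    have h := hMeq
    rw [hM1def, hM2def] at h
    have h' : (p1.1)⁻¹ • ofd p1.2 = (p2.1)⁻¹ • ofd p2.2 := by
      have := add_right_cancel h
      exact this
    rw [← hlam] at h'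
    exact smul_right_injective _ (inv_ne_zero h1ne) h'
  have hU : p1.2 = p2.2 := by
    ext i j
    by_cases h : i = j
    · subst h
      rw [hU1.2.1 i, hU2.2.1 i]
    · have hij := congrFun (congrFun hofd i) j
      simpa [ofd, Matrix.sub_apply, Matrix.diagonal_apply, h] using hij
  exact Prod.ext hlam hU
end
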